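/- arXiv:2408.17368 — 4 statements merged into one kernel-verified Lean document; each statement's English description precedes it below -/
import Mathlib

section
/- Every simple lattice automaton can be transformed into a verdict transition system yielding the same values: given a simple lattice automaton A = (L, Σ, Q, Q₀, δ, F) over a lattice L, the VTS V with states Q, actions Σ, initial states {q : Q₀(q) = ⊤}, transitions {t : δ(t) = ⊤}, verdict domain L, and verdict function F satisfies: for every word w accepted by V, the joined verdict of V on w equals the value val(w) of A on w, whenever val(w) ≠ ⊥. -/
/-- A transition system (S, Act, I, T). -/
structure TS (S A : Type) where
  init : Set S
  rel : Set (S × A × S)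

namespace TS

variable {S A : Type}

/-- Post(X, As): the set of As-successors of X. -/
def post (M : TS S A) (X : Set S) (As : Set A) : Set S :=
  {s' | ∃ s ∈ X, ∃ a ∈ As, (s, a, s') ∈ M.rel}

/-- The set of w-reachable states: reach(ε) = I, reach(w·a) = Post(reach(w), {a}). -/
def reach (M : TS S A) (w : List A) : Set S :=
  w.foldl (fun X a => M.post X {a}) M.init

/-- The language of a TS: the set of accepted words, i.e. those with reach(w) ≠ ∅. -/
def lang (M : TS S A) : Set (List A) := {w | M.reach w ≠ ∅}

end TS

/-- A verdict transition system (VTS): a TS together with a verdict function. -/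
structure VTS (Q A Λ : Type) extends TS Q A where
  verdict : Q → Λ

variable {Q A L : Type} [Lattice L] [BoundedOrder L]

/-- val of a run: starting in state q, reading word w along the remaining run r;
meets the transition values δ(q_{i-1}, a_i, q_i) and finally F(q_n).  Runs of
mismatched length get value ⊥ (they contribute nothing to the join). -/
def runVal (δ : Q × A × Q → L) (F : Q → L) : Q → List A → List Q → L
  | q, [], [] => F q
  | q, a :: w, q' :: r => δ (q, a, q') ⊓ runVal δ F q' w r
  | _, _, _ => ⊥

lemma aux_le (δ : Q × A × Q → L) (F : Q → L)
    (hsimpleδ : ∀ t, δ t = ⊤ ∨ δ t = ⊥) (M : TS Q A) (hrel : M.rel = {t | δ t = ⊤}) :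
    ∀ (w : List A) (X : Set Q) (q : Q) (r : List Q) (x : L),
      x ∈ upperBounds (F '' (w.foldl (fun X a => M.post X {a}) X)) →
      q ∈ X → runVal δ F q w r ≤ x := by
  intro w
  induction w with
  | nil =>
    intro X q r x hx hq
    cases r with
    | nil => exact hx ⟨q, hq, rfl⟩
    | cons _ _ => simp [runVal]
  | cons a w ih =>
    intro X q r x hx hq
    cases r with
    | nil => simp [runVal]
    | cons q' r' =>
      rcases hsimpleδ (q, a, q') with h | h
      · have hq' : q' ∈ M.post X {a} := ⟨q, hq, a, rfl, by rw [hrel]; exact h⟩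
        calc runVal δ F q (a::w) (q'::r') ≤ runVal δ F q' w r' := by
              simp [runVal, h]
          _ ≤ x := ih _ q' r' x hx hq'
      · simp [runVal, h]

lemma aux_exists (δ : Q × A × Q → L) (F : Q → L)
    (M : TS Q A) (hrel : M.rel = {t | δ t = ⊤}) :
    ∀ (w : List A) (X : Set Q) (q : Q),
      q ∈ w.foldl (fun X a => M.post X {a}) X →
      ∃ q₀ ∈ X, ∃ r : List Q, runVal δ F q₀ w r = F q := by
  intro w
  induction w with
  | nil => intro X q hq; exact ⟨q, hq, [], rfl⟩
  | cons a w ih =>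
    intro X q hq
    obtain ⟨q₁, hq₁, r', hr'⟩ := ih (M.post X {a}) q hq
    obtain ⟨q₀, hq₀, a', ha', ht⟩ := hq₁
    rw [Set.mem_singleton_iff] at ha'; subst ha'
    rw [hrel, Set.mem_setOf_eq] at ht
    refine ⟨q₀, hq₀, q₁ :: r', ?_⟩
    simp [runVal, ht, hr']

/-- every simple lattice automaton (L, Σ, Q, Q₀, δ, F) can be
transformed into a VTS (states Q, initial states {q | Q₀ q = ⊤}, transitions
{t | δ t = ⊤}, verdict function F) such that for every word w accepted by the
VTS with val(w) ≠ ⊥, the joined verdict of the VTS on w equals val(w), the join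
of val(w, r) = Q₀(q₀) ⊓ ⊓ᵢ δ(q_{i-1}, a_i, q_i) ⊓ F(q_n) over all runs r. -/
theorem stmt_6 (Q₀ : Q → L) (δ : Q × A × Q → L) (F : Q → L)
    (hsimple₀ : ∀ q, Q₀ q = ⊤ ∨ Q₀ q = ⊥)
    (hsimpleδ : ∀ t, δ t = ⊤ ∨ δ t = ⊥)
    (V : VTS Q A L)
    (hV : V = { init := {q | Q₀ q = ⊤}, rel := {t | δ t = ⊤}, verdict := F })
    (w : List A) (hw : w ∈ V.toTS.lang)
    (valw : L)
    (hval : IsLUB {v | ∃ (q₀ : Q) (r : List Q), v = Q₀ q₀ ⊓ runVal δ F q₀ w r} valw)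
    (hbot : valw ≠ ⊥) :
    IsLUB (V.verdict '' V.toTS.reach w) valw := by
  subst hV
  have hub : upperBounds (F '' (TS.reach { init := {q | Q₀ q = ⊤}, rel := {t | δ t = ⊤} } w))
      = upperBounds {v | ∃ (q₀ : Q) (r : List Q), v = Q₀ q₀ ⊓ runVal δ F q₀ w r} := by
    ext x
    constructor
    · intro hx v hv
      obtain ⟨q₀, r, rfl⟩ := hv
      rcases hsimple₀ q₀ with h | h
      · calc Q₀ q₀ ⊓ runVal δ F q₀ w r ≤ runVal δ F q₀ w r := inf_le_right
          _ ≤ x := aux_le δ F hsimpleδ _ rfl w _ q₀ r x hx h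
      · simp [h]
    · intro hx v hv
      obtain ⟨q, hq, rfl⟩ := hv
      obtain ⟨q₀, hq₀, r, hr⟩ := aux_exists δ F _ rfl w _ q hq
      have := hx ⟨q₀, r, rfl⟩
      rw [Set.mem_setOf_eq] at hq₀
      rw [hq₀, top_inf_eq, hr] at this
      exact this
  exact ⟨hub ▸ hval.1, fun x hx => hval.2 (hub ▸ hx)⟩
end

section
/- In a monotonic VTS, verdicts are non-increasing along traces: if w is a prefix of w' and both are traces of a monotonic VTS V, then the verdict yielded for w' is at least as specific as (⊑) the verdict yielded for w. -/
variable {Q Q' Q'' A Λ : Type} [SemilatticeSup Λ]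

/-- The verdict yielded by a VTS for a trace w: the join (least upper bound)
of the verdicts of the w-reachable states. -/
def VTS.yields (V : VTS Q A Λ) (w : List A) (v : Λ) : Prop :=
  IsLUB (V.verdict '' V.toTS.reach w) v

/-- V refines V': same language, and V yields at least as specific verdicts. -/
def VTS.Refines (V : VTS Q A Λ) (V' : VTS Q' A Λ) : Prop :=
  V.toTS.lang = V'.toTS.lang ∧
  ∀ w ∈ V.toTS.lang, ∀ v v', V.yields w v → V'.yields w v' → v ≤ v'

/-- A VTS is monotonic iff every state's successors have verdicts at least as
specific as the state's own verdict. -/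
def VTS.Monotonic (V : VTS Q A Λ) : Prop :=
  ∀ q : Q, ∀ q' ∈ V.toTS.post {q} Set.univ, V.verdict q' ≤ V.verdict q


lemma reach_append (M : TS Q A) (w u : List A) :
    M.reach (w ++ u) = u.foldl (fun X a => M.post X {a}) (M.reach w) := by
  simp [TS.reach, List.foldl_append]

lemma dominated (V : VTS Q A Λ) (hmono : V.Monotonic) (w u : List A) :
    ∀ q' ∈ V.toTS.reach (w ++ u), ∃ q ∈ V.toTS.reach w,
      V.verdict q' ≤ V.verdict q := by
  rw [reach_append]
  induction u generalizing w with
  | nil => intro q hq; exact ⟨q, hq, le_refl _⟩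
  | cons a u ih =>
    intro q' hq'
    -- foldl over (a :: u) from X = step of X
    have h : ∀ q' ∈ u.foldl (fun X a => V.toTS.post X {a})
        (V.toTS.post (V.toTS.reach w) {a}), ∃ q ∈ V.toTS.reach w,
        V.verdict q' ≤ V.verdict q := by
      intro p hp
      have : V.toTS.post (V.toTS.reach w) {a} = V.toTS.reach (w ++ [a]) := by
        simp [reach_append, TS.reach]
      rw [this] at hp
      obtain ⟨q, hq, hle⟩ := ih (w ++ [a]) p hp
      rw [reach_append] at hq
      simp only [List.foldl_cons, List.foldl_nil] at hq
      obtain ⟨s, hs, a', ha', htr⟩ := hq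
      have : V.verdict q ≤ V.verdict s :=
        hmono s q ⟨s, rfl, a', Set.mem_univ a', htr⟩
      exact ⟨s, hs, le_trans hle this⟩
    exact h q' hq'

/-- in a monotonic VTS, verdicts are non-increasing along traces:
if w is a prefix of w' and both are traces, then the verdict yielded for w' is
at least as specific as (≤) the verdict yielded for w. -/
theorem stmt_9 (V : VTS Q A Λ) (hmono : V.Monotonic)
    (w w' : List A) (hpre : w <+: w')
    (hw : w ∈ V.toTS.lang) (hw' : w' ∈ V.toTS.lang)
    (v v' : Λ) (hv : V.yields w v) (hv' : V.yields w' v') :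
    v' ≤ v := by
  obtain ⟨u, rfl⟩ := hpre
  apply hv'.2
  rintro x ⟨q', hq', rfl⟩
  obtain ⟨q, hq, hle⟩ := dominated V hmono w u q' hq'
  exact le_trans hle (hv.1 ⟨q, hq, rfl⟩)
end

section
/- Lookahead refinement is a refinement: for any VTS V with verdict function λ, the lookahead-refined VTS V' obtained by iterating the refinement operator |Q| times satisfies V' ⪯ V; in particular, the iterates satisfy λ_{i+1}(q) ⊑ λ_i(q) ⊑ λ(q) for all states q and all i, L(V') = L(V), and λ̂'(w) ⊑ λ̂(w) for all traces w. -/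
variable {Q A Λ : Type} [CompleteLattice Λ]

/-- The verdict yielded by a VTS for a trace w: the join of the verdicts of
the w-reachable states. -/
def VTS.yield (V : VTS Q A Λ) (w : List A) : Λ :=
  sSup (V.verdict '' V.toTS.reach w)

open Classical in
/-- One step of the lookahead refinement operator: for a monotonic state q
(all successors have verdicts ⊑ λ(q)), the new verdict is the join of the
f-verdicts of the successors of q; otherwise it stays λ(q). -/
noncomputable def refineStep (V : VTS Q A Λ) (f : Q → Λ) : Q → Λ :=
  fun q =>
    if ∀ q' ∈ V.toTS.post {q} Set.univ, V.verdict q' ≤ V.verdict q then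
      sSup (f '' V.toTS.post {q} Set.univ)
    else V.verdict q

/-- The lookahead-refined verdict functions: λ₀ = λ, λ_{i+1} = refineStep λ_i. -/
noncomputable def lam (V : VTS Q A Λ) (i : ℕ) : Q → Λ :=
  (refineStep V)^[i] V.verdict

/-- The lookahead-refined VTS: same transition structure, verdicts λ_{|Q|}. -/
noncomputable def lookahead [Fintype Q] (V : VTS Q A Λ) : VTS Q A Λ :=
  { toTS := V.toTS, verdict := lam V (Fintype.card Q) }

private lemma refineStep_mono (V : VTS Q A Λ) {f g : Q → Λ} (h : ∀ q, f q ≤ g q) :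
    ∀ q, refineStep V f q ≤ refineStep V g q := by
  intro q
  unfold refineStep
  split
  · apply sSup_le
    rintro x ⟨q', hq', rfl⟩
    exact le_sSup_of_le ⟨q', hq', rfl⟩ (h q')
  · exact le_refl _

private lemma lam_succ_le (V : VTS Q A Λ) : ∀ i q, lam V (i + 1) q ≤ lam V i q := by
  intro i
  induction i with
  | zero =>
    intro q
    show refineStep V V.verdict q ≤ V.verdict q
    unfold refineStep
    split
    · next hmon =>
      exact sSup_le (by rintro x ⟨q', hq', rfl⟩; exact hmon q' hq')
    · exact le_refl _
  | succ n ih =>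
    intro q
    have h1 : lam V (n + 2) = refineStep V (lam V (n + 1)) := by
      simp [lam, Function.iterate_succ_apply']
    have h2 : lam V (n + 1) = refineStep V (lam V n) := by
      simp [lam, Function.iterate_succ_apply']
    rw [h1, h2]
    exact refineStep_mono V (fun q' => h2 ▸ ih q') q

private lemma lam_le_verdict (V : VTS Q A Λ) : ∀ i q, lam V i q ≤ V.verdict q := by
  intro i
  induction i with
  | zero => intro q; exact le_refl _
  | succ n ih => intro q; exact le_trans (lam_succ_le V n q) (ih q)

/-- lookahead refinement is a refinement: λ_{i+1}(q) ⊑ λ_i(q) ⊑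
λ(q) for all states q and all i, the lookahead-refined VTS V' has the same
language as V, and yields verdicts at least as specific: λ̂'(w) ⊑ λ̂(w) for all
traces w, i.e. V' ⪯ V. -/
theorem stmt_12 [Fintype Q] (V : VTS Q A Λ) :
    (∀ (i : ℕ) (q : Q), lam V (i + 1) q ≤ lam V i q ∧ lam V i q ≤ V.verdict q) ∧
    (lookahead V).toTS.lang = V.toTS.lang ∧
    (∀ w ∈ (lookahead V).toTS.lang, (lookahead V).yield w ≤ V.yield w) := by
  refine ⟨fun i q => ⟨lam_succ_le V i q, lam_le_verdict V i q⟩, rfl, ?_⟩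
  intro w _
  apply sSup_le
  rintro x ⟨q, hq, rfl⟩
  exact le_sSup_of_le ⟨q, hq, rfl⟩ (lam_le_verdict V _ q)
end

section
/- Correctness of observability projection (Theorem 2): for a VTS V over verdict domain Λ and observable actions Obs ⊆ Act, the observability-projected VTS V' satisfies (i) L(V') = {w|Obs : w ∈ L(V)}, and (ii) for every w' ∈ L(V'), the verdict of V' on w' equals ⊔{λ̂(w) : w ∈ L(V) with w|Obs = w'}. -/
variable {Q A Λ : Type} [CompleteLattice Λ]

/-- The `Obs`-projection of a word: removes all symbols not in `Obs`. -/
noncomputable def wordProj (Obs : Set A) (w : List A) : List A :=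
  open Classical in w.filter (fun a => decide (a ∈ Obs))

/-- One unobservable step: a transition labeled with an action outside Obs. -/
def unobsStep (V : VTS Q A Λ) (Obs : Set A) (q q' : Q) : Prop :=
  ∃ a ∉ Obs, (q, a, q') ∈ V.rel

/-- X(q): the set of states reachable from q via finitely many unobservable
transitions. -/
def unobsClosure (V : VTS Q A Λ) (Obs : Set A) (q : Q) : Set Q :=
  {q' | Relation.ReflTransGen (unobsStep V Obs) q q'}

/-- The observability-projected VTS V' = (Q, Obs, Q₀, T', Λ, λ') with
λ'(q) = ⊔_{q' ∈ X(q)} λ(q') and (q, o, q'') ∈ T' iff o ∈ Obs and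
(q', o, q'') ∈ T for some q' ∈ X(q). -/
noncomputable def obsProj (V : VTS Q A Λ) (Obs : Set A) : VTS Q A Λ where
  init := V.init
  rel := {t | t.2.1 ∈ Obs ∧ ∃ q' ∈ unobsClosure V Obs t.1, (q', t.2.1, t.2.2) ∈ V.rel}
  verdict := fun q => sSup (V.verdict '' unobsClosure V Obs q)

section AuxReach
variable {S B : Type}

def reachF (M : TS S B) (X : Set S) (w : List B) : Set S :=
  w.foldl (fun X a => M.post X {a}) X

lemma reachF_nil (M : TS S B) (X : Set S) : reachF M X [] = X := rfl

lemma reachF_cons (M : TS S B) (X : Set S) (a : B) (w : List B) :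
    reachF M X (a :: w) = reachF M (M.post X {a}) w := rfl

lemma reachF_append (M : TS S B) (X : Set S) (u v : List B) :
    reachF M X (u ++ v) = reachF M (reachF M X u) v :=
  List.foldl_append

lemma post_empty (M : TS S B) (As : Set B) : M.post ∅ As = ∅ := by
  ext s; simp [TS.post]

lemma reachF_empty (M : TS S B) (w : List B) : reachF M (∅ : Set S) w = ∅ := by
  induction w with
  | nil => rfl
  | cons a w ih => rw [reachF_cons, post_empty, ih]

lemma post_mono (M : TS S B) {X Y : Set S} (h : X ⊆ Y) (As : Set B) :
    M.post X As ⊆ M.post Y As := by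
  rintro s ⟨t, ht, a, ha, hr⟩; exact ⟨t, h ht, a, ha, hr⟩

lemma reachF_mono (M : TS S B) {X Y : Set S} (h : X ⊆ Y) (w : List B) :
    reachF M X w ⊆ reachF M Y w := by
  induction w generalizing X Y with
  | nil => exact h
  | cons a w ih => exact ih (post_mono M h _)

lemma post_iUnion {ι : Sort*} (M : TS S B) (X : ι → Set S) (As : Set B) :
    M.post (⋃ i, X i) As = ⋃ i, M.post (X i) As := by
  ext s
  simp only [TS.post, Set.mem_iUnion, Set.mem_setOf_eq]
  tauto

lemma reachF_iUnion {ι : Sort*} (M : TS S B) (X : ι → Set S) (w : List B) :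
    reachF M (⋃ i, X i) w = ⋃ i, reachF M (X i) w := by
  induction w generalizing X with
  | nil => rfl
  | cons a w ih => rw [reachF_cons, post_iUnion, ih]; rfl

end AuxReach

section ObsAux
variable {Q A Λ : Type} [CompleteLattice Λ] (V : VTS Q A Λ) (Obs : Set A)

def setClosure (X : Set Q) : Set Q :=
  {q' | ∃ q ∈ X, q' ∈ unobsClosure V Obs q}

lemma subset_setClosure (X : Set Q) : X ⊆ setClosure V Obs X :=
  fun q hq => ⟨q, hq, Relation.ReflTransGen.refl⟩

lemma mem_setClosure_iff {X : Set Q} {q' : Q} :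
    q' ∈ setClosure V Obs X ↔
      ∃ u : List A, (∀ a ∈ u, a ∉ Obs) ∧ q' ∈ reachF V.toTS X u := by
  constructor
  · rintro ⟨q, hq, hrtg⟩
    induction hrtg with
    | refl => exact ⟨[], by simp, hq⟩
    | tail hbc hstep ih =>
      obtain ⟨u, hu, hb⟩ := ih
      obtain ⟨a, ha, hrel⟩ := hstep
      refine ⟨u ++ [a], ?_, ?_⟩
      · intro x hx
        rcases List.mem_append.1 hx with h | h
        · exact hu x h
        · simp only [List.mem_singleton] at h; subst h; exact ha
      · rw [reachF_append]
        exact ⟨_, hb, a, rfl, hrel⟩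
  · rintro ⟨u, hu, hq'⟩
    induction u generalizing X with
    | nil => exact ⟨q', hq', Relation.ReflTransGen.refl⟩
    | cons a u ih =>
      have ha : a ∉ Obs := hu a List.mem_cons_self
      rw [reachF_cons] at hq'
      obtain ⟨q, hq, hrtg⟩ := ih (fun x hx => hu x (List.mem_cons_of_mem a hx)) hq'
      obtain ⟨q0, hq0, b, hb, hrel⟩ := hq
      have hb' : b = a := hb
      subst hb'
      exact ⟨q0, hq0, Relation.ReflTransGen.head ⟨b, ha, hrel⟩ hrtg⟩

lemma setClosure_eq_iUnion (X : Set Q) :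
    setClosure V Obs X
      = ⋃ u : {u : List A // ∀ a ∈ u, a ∉ Obs}, reachF V.toTS X u.1 := by
  ext q'
  simp only [Set.mem_iUnion, mem_setClosure_iff, Subtype.exists, exists_prop]

lemma obsProj_post (X : Set Q) {o : A} (ho : o ∈ Obs) :
    (obsProj V Obs).toTS.post X {o} = V.toTS.post (setClosure V Obs X) {o} := by
  ext q''
  constructor
  · rintro ⟨q, hq, b, hb, hbObs, q', hq', hrel⟩
    exact ⟨q', ⟨q, hq, hq'⟩, b, hb, hrel⟩
  · rintro ⟨q', ⟨q, hq, hcl⟩, b, hb, hrel⟩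
    have hb' : b = o := hb
    subst hb'
    exact ⟨q, hq, b, rfl, ho, q', hcl, hrel⟩

lemma obsProj_post_not (X : Set Q) {o : A} (ho : o ∉ Obs) :
    (obsProj V Obs).toTS.post X {o} = ∅ := by
  ext q''
  simp only [Set.mem_empty_iff_false, iff_false]
  rintro ⟨q, hq, b, hb, hbObs, _⟩
  have hb' : b = o := hb
  subst hb'
  exact ho hbObs

lemma wordProj_eq_nil {w : List A} :
    wordProj Obs w = [] ↔ ∀ a ∈ w, a ∉ Obs := by
  simp [wordProj]

lemma wordProj_eq_cons {v : List A} {o : A} {w' : List A} :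
    wordProj Obs v = o :: w' ↔
      ∃ u w, v = u ++ o :: w ∧ (∀ a ∈ u, a ∉ Obs) ∧ o ∈ Obs
        ∧ wordProj Obs w = w' := by
  simp [wordProj, List.filter_eq_cons_iff]

lemma claimA (w' : List A) (hw' : ∀ a ∈ w', a ∈ Obs) (X : Set Q) :
    setClosure V Obs (reachF (obsProj V Obs).toTS X w')
      = {q | ∃ w, wordProj Obs w = w' ∧ q ∈ reachF V.toTS X w} := by
  induction w' generalizing X with
  | nil =>
    ext q
    simp only [reachF_nil, mem_setClosure_iff, Set.mem_setOf_eq]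
    constructor
    · rintro ⟨u, hu, hq⟩
      exact ⟨u, (wordProj_eq_nil Obs).2 hu, hq⟩
    · rintro ⟨w, hw, hq⟩
      exact ⟨w, (wordProj_eq_nil Obs).1 hw, hq⟩
  | cons o w' ih =>
    have ho : o ∈ Obs := hw' o List.mem_cons_self
    rw [reachF_cons, ih (fun a ha => hw' a (List.mem_cons_of_mem o ha)),
        obsProj_post V Obs X ho]
    ext q
    simp only [Set.mem_setOf_eq]
    constructor
    · rintro ⟨w, hw, hq⟩
      rw [setClosure_eq_iUnion, post_iUnion, reachF_iUnion, Set.mem_iUnion] at hq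
      obtain ⟨⟨u, hu⟩, hq⟩ := hq
      refine ⟨u ++ o :: w, ?_, ?_⟩
      · exact (wordProj_eq_cons Obs).2 ⟨u, w, rfl, hu, ho, hw⟩
      · rw [reachF_append, reachF_cons]; exact hq
    · rintro ⟨v, hv, hq⟩
      obtain ⟨u, w, rfl, hu, -, hw⟩ := (wordProj_eq_cons Obs).1 hv
      rw [reachF_append, reachF_cons] at hq
      refine ⟨w, hw, reachF_mono _ (post_mono _ ?_ _) _ hq⟩
      exact fun x hx => (mem_setClosure_iff V Obs).2 ⟨u, hu, hx⟩

lemma lang_obs {w' : List A} (h : w' ∈ (obsProj V Obs).toTS.lang) :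
    ∀ a ∈ w', a ∈ Obs := by
  intro a ha
  by_contra hno
  obtain ⟨u, v, rfl⟩ := List.append_of_mem ha
  apply h
  show reachF (obsProj V Obs).toTS (obsProj V Obs).init (u ++ a :: v) = ∅
  rw [reachF_append, reachF_cons, obsProj_post_not V Obs _ hno, reachF_empty]

end ObsAux

/-- Theorem 2, correctness of observability projection:
(i) L(V') = {w|Obs : w ∈ L(V)}, and (ii) for every w' ∈ L(V'), the verdict of
V' on w' is the join of the verdicts of V on all traces w ∈ L(V) with
w|Obs = w'. -/
theorem stmt_16 (V : VTS Q A Λ) (Obs : Set A) :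
    (obsProj V Obs).toTS.lang = wordProj Obs '' V.toTS.lang ∧
    ∀ w' ∈ (obsProj V Obs).toTS.lang,
      (obsProj V Obs).yield w'
        = sSup {v | ∃ w ∈ V.toTS.lang, wordProj Obs w = w' ∧ v = V.yield w} := by
  have hreach' : ∀ w' : List A,
      (obsProj V Obs).toTS.reach w' = reachF (obsProj V Obs).toTS V.init w' :=
    fun _ => rfl
  have hreach : ∀ w : List A, V.toTS.reach w = reachF V.toTS V.init w :=
    fun _ => rfl
  constructor
  · ext w'
    simp only [TS.lang, Set.mem_setOf_eq, Set.mem_image]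
    constructor
    · intro h
      have hobs : ∀ a ∈ w', a ∈ Obs := lang_obs V Obs h
      obtain ⟨q, hq⟩ := Set.nonempty_iff_ne_empty.2 h
      have hq' : q ∈ setClosure V Obs ((obsProj V Obs).toTS.reach w') :=
        subset_setClosure V Obs _ hq
      rw [hreach', claimA V Obs w' hobs V.init] at hq'
      obtain ⟨w, hw, hqw⟩ := hq'
      exact ⟨w, fun he => by rw [hreach w] at he; rw [he] at hqw; exact hqw, hw⟩
    · rintro ⟨w, hw, rfl⟩
      have hobs : ∀ a ∈ wordProj Obs w, a ∈ Obs := by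
        intro a ha
        have := List.of_mem_filter ha
        simpa using this
      obtain ⟨q, hq⟩ := Set.nonempty_iff_ne_empty.2 hw
      have hq' : q ∈ setClosure V Obs ((obsProj V Obs).toTS.reach (wordProj Obs w)) := by
        rw [hreach', claimA V Obs _ hobs V.init]
        exact ⟨w, rfl, hq⟩
      obtain ⟨q0, hq0, -⟩ := hq'
      exact fun he => by rw [he] at hq0; exact hq0
  · intro w' hw'
    have hobs : ∀ a ∈ w', a ∈ Obs := lang_obs V Obs hw'
    have hCA := claimA V Obs w' hobs V.init
    rw [← hreach'] at hCA
    have step1 : (obsProj V Obs).yield w'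
        = sSup (V.verdict '' setClosure V Obs ((obsProj V Obs).toTS.reach w')) := by
      apply le_antisymm
      · apply sSup_le
        rintro v ⟨q, hq, rfl⟩
        apply sSup_le
        rintro x ⟨q', hq', rfl⟩
        exact le_sSup ⟨q', ⟨q, hq, hq'⟩, rfl⟩
      · apply sSup_le
        rintro x ⟨q', ⟨q, hq, hcl⟩, rfl⟩
        have h1 : V.verdict q' ≤ sSup (V.verdict '' unobsClosure V Obs q) :=
          le_sSup ⟨q', hcl, rfl⟩
        have h2 : sSup (V.verdict '' unobsClosure V Obs q)
            ≤ sSup ((obsProj V Obs).verdict '' (obsProj V Obs).toTS.reach w') :=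
          le_sSup (⟨q, hq, rfl⟩ :
            (obsProj V Obs).verdict q ∈ (obsProj V Obs).verdict '' (obsProj V Obs).toTS.reach w')
        exact le_trans h1 h2
    rw [step1, hCA]
    apply le_antisymm
    · apply sSup_le
      rintro x ⟨q, ⟨w, hw, hq⟩, rfl⟩
      have h1 : V.verdict q ≤ V.yield w := le_sSup ⟨q, hq, rfl⟩
      have h2 : V.yield w ∈ {v | ∃ w ∈ V.toTS.lang, wordProj Obs w = w' ∧ v = V.yield w} :=
        ⟨w, fun he => by rw [hreach w] at he; rw [he] at hq; exact hq, hw, rfl⟩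
      exact le_trans h1 (le_sSup h2)
    · apply sSup_le
      rintro v ⟨w, hwlang, hw, rfl⟩
      apply sSup_le
      rintro x ⟨q, hq, rfl⟩
      exact le_sSup ⟨q, ⟨w, hw, hq⟩, rfl⟩
end
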